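/- arXiv:2605.03920 — 6 statements merged into one kernel-verified Lean document; each statement's English description precedes it below -/
import Mathlib

section
/- Let j ≥ 1 be an integer and f a sufficiently smooth 2π-periodic function. Then the commutator of the Hilbert transform with multiplication by cos(jx) satisfies: [H, cos(j·)]f(x) = (i/2)f̂_0(e^{-ijx} - e^{ijx}) + (i/2)(f̂_j - f̂_{-j}) + i·Σ_{m=1}^{j-1}(f̂_m e^{-i(j-m)x} - f̂_{-m} e^{i(j-m)x}). -/
/-!
Write `e_k(x) = e^{ikx}`, so that `cos(jx) = (e_j + e_{-j})/2`. For any bounded Fourier multiplier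
`σ`, the commutator `[σ(D), e_j]` sends `f = ∑ f̂_n e_n` to `∑ (σ(n+j) - σ(n)) f̂_n e_{n+j}`.
For the Hilbert symbol `σ = -i sgn` the jump `sgn(n+j) - sgn(n)` vanishes off `[-j, 0]`, equals `1`
at both endpoints and `2` strictly inside, so both commutators are finite sums, which add up to the
stated trigonometric polynomial.
-/

open Complex Finset

section MultiplierCommutator

variable {σ e a : ℤ → ℂ} {C : ℝ}

lemma summable_mul_comp_sub_mul (hσ : ∀ k, ‖σ k‖ ≤ C) (he : ∀ k, ‖e k‖ = 1)
    (ha : Summable fun k => ‖a k‖) (j : ℤ) :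
    Summable fun k => σ k * a (k - j) * e k := by
  refine .of_norm_bounded (((Equiv.subRight j).summable_iff.mpr ha).mul_left C) fun k => ?_
  rw [norm_mul, norm_mul, he, mul_one]
  exact mul_le_mul_of_nonneg_right (hσ k) (norm_nonneg _)

lemma tsum_multiplier_shift_commutator (hσ : ∀ k, ‖σ k‖ ≤ C) (he : ∀ k, ‖e k‖ = 1)
    (he_add : ∀ m n, e (m + n) = e m * e n) (ha : Summable fun k => ‖a k‖) (j : ℤ) :
    ∑' k, σ k * a (k - j) * e k - e j * ∑' k, σ k * a k * e k =
      ∑' n, (σ (n + j) - σ n) * (a n * e (n + j)) := by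
  have hshift : e j * ∑' k, σ k * a k * e k = ∑' k, σ (k - j) * a (k - j) * e k := by
    rw [← tsum_mul_left, ← (Equiv.subRight j).tsum_eq]
    refine tsum_congr fun k => ?_
    rw [Equiv.subRight_apply, ← sub_add_cancel k j, he_add, add_sub_cancel_right]
    ring
  rw [hshift, ← Summable.tsum_sub (summable_mul_comp_sub_mul hσ he ha j)
    (summable_mul_comp_sub_mul (σ := fun k => σ (k - j)) (fun k => hσ _) he ha j),
    ← (Equiv.addRight j).tsum_eq]
  refine tsum_congr fun n => ?_
  rw [Equiv.coe_addRight, add_sub_cancel_right]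
  ring

lemma tsum_multiplier_cos_commutator (hσ : ∀ k, ‖σ k‖ ≤ C) (he : ∀ k, ‖e k‖ = 1)
    (he_add : ∀ m n, e (m + n) = e m * e n) (ha : Summable fun k => ‖a k‖) (j : ℤ) :
    ∑' k, σ k * ((a (k - j) + a (k + j)) / 2) * e k - (e j + e (-j)) / 2 * ∑' k, σ k * a k * e k =
      (∑' n, (σ (n + j) - σ n) * (a n * e (n + j)) +
        ∑' n, (σ (n - j) - σ n) * (a n * e (n - j))) / 2 := by
  have hminus := tsum_multiplier_shift_commutator hσ he he_add ha (-j)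
  simp only [sub_neg_eq_add, ← sub_eq_add_neg] at hminus
  have hplus := summable_mul_comp_sub_mul hσ he ha (-j)
  simp only [sub_neg_eq_add] at hplus
  have hsplit : ∑' k, σ k * ((a (k - j) + a (k + j)) / 2) * e k =
      (∑' k, σ k * a (k - j) * e k + ∑' k, σ k * a (k + j) * e k) / 2 := by
    rw [← Summable.tsum_add (summable_mul_comp_sub_mul hσ he ha j) hplus, ← tsum_div_const]
    exact tsum_congr fun k => by ring
  rw [← tsum_multiplier_shift_commutator hσ he he_add ha j, ← hminus, hsplit]
  ring

end MultiplierCommutator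

section SignJump

variable {j : ℤ}

lemma tsum_sign_sub_sub_sign_mul (g : ℤ → ℂ) (hj : 1 ≤ j) :
    ∑' n, (((n - j).sign : ℂ) - n.sign) * g n = -(g 0 + g j + 2 * ∑ m ∈ Icc 1 (j - 1), g m) := by
  have hsupp : ∀ n ∉ Icc 0 j, (((n - j).sign : ℂ) - n.sign) * g n = 0 := by
    intro n hn
    rw [mem_Icc, not_and_or, not_le, not_le] at hn
    rcases hn with hneg | hgt
    · rw [Int.sign_eq_neg_one_of_neg hneg, Int.sign_eq_neg_one_of_neg (by omega : n - j < 0),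
        sub_self, zero_mul]
    · rw [Int.sign_eq_one_of_pos (by omega : 0 < n), Int.sign_eq_one_of_pos (by omega : 0 < n - j),
        sub_self, zero_mul]
  have hinterior : ∀ m ∈ Ioo 0 j, (((m - j).sign : ℂ) - m.sign) * g m = -(2 * g m) := by
    intro m hm
    rw [mem_Ioo] at hm
    rw [Int.sign_eq_one_of_pos hm.1, Int.sign_eq_neg_one_of_neg (by omega : m - j < 0)]
    push_cast
    ring
  have hIoo : Icc 1 (j - 1) = Ioo 0 j := by
    ext m
    simp only [mem_Icc, mem_Ioo]
    omega
  rw [tsum_eq_sum hsupp, Icc_eq_cons_Ioc (by omega), sum_cons, Ioc_eq_cons_Ioo (by omega), sum_cons,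
    sum_congr rfl hinterior, sum_neg_distrib, ← mul_sum, hIoo, zero_sub, sub_self, Int.sign_neg,
    Int.sign_eq_one_of_pos (by omega : 0 < j), Int.sign_zero]
  push_cast
  ring

lemma tsum_sign_add_sub_sign_mul (g : ℤ → ℂ) (hj : 1 ≤ j) :
    ∑' n, (((n + j).sign : ℂ) - n.sign) * g n =
      g 0 + g (-j) + 2 * ∑ m ∈ Icc 1 (j - 1), g (-m) := by
  have hreflect : ∀ n, ((((-n) + j).sign : ℂ) - (-n).sign) * g (-n) =
      -((((n - j).sign : ℂ) - n.sign) * g (-n)) := by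
    intro n
    rw [show -n + j = -(n - j) by ring, Int.sign_neg, Int.sign_neg]
    push_cast
    ring
  rw [← (Equiv.neg ℤ).tsum_eq]
  simp only [Equiv.neg_apply, hreflect, tsum_neg, tsum_sign_sub_sub_sign_mul (fun n => g (-n)) hj,
    neg_neg, neg_zero]

end SignJump

/-- commutator of the Hilbert transform with `cos (j·)`.
Let `j ≥ 1` and let `f` be a smooth `2π`-periodic function with absolutely summable
Fourier coefficients `a : ℤ → ℂ`.  The periodic Hilbert transform acts on Fourier modes by
`(Hf)^(k) = -i·sgn(k)·a k`, and the Fourier coefficients of `cos(j·)·f` are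
`(a (k-j) + a (k+j))/2`.  Then for every `x`:
`[H, cos(j·)]f(x) = (i/2)·a₀·(e^{-ijx} - e^{ijx}) + (i/2)(a_j - a_{-j})
  + i·∑_{m=1}^{j-1} (a_m e^{-i(j-m)x} - a_{-m} e^{i(j-m)x})`. -/
theorem stmt4 (j : ℤ) (hj : 1 ≤ j) (a : ℤ → ℂ)
    (ha : Summable fun k : ℤ => ‖a k‖) (x : ℝ) :
    (∑' k : ℤ, (-Complex.I) * ((k.sign : ℤ) : ℂ) * ((a (k - j) + a (k + j)) / 2) *
        Complex.exp (Complex.I * (k : ℂ) * (x : ℂ)))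
      - Complex.cos ((j : ℂ) * (x : ℂ)) *
        (∑' k : ℤ, (-Complex.I) * ((k.sign : ℤ) : ℂ) * a k *
          Complex.exp (Complex.I * (k : ℂ) * (x : ℂ)))
    = (Complex.I / 2) * a 0 *
        (Complex.exp (-(Complex.I * (j : ℂ) * (x : ℂ))) -
          Complex.exp (Complex.I * (j : ℂ) * (x : ℂ)))
      + (Complex.I / 2) * (a j - a (-j))
      + Complex.I * ∑ m ∈ Finset.Icc (1 : ℤ) (j - 1),
          (a m * Complex.exp (-(Complex.I * ((j : ℂ) - (m : ℂ)) * (x : ℂ)))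
            - a (-m) * Complex.exp (Complex.I * ((j : ℂ) - (m : ℂ)) * (x : ℂ))) := by
  set e : ℤ → ℂ := fun k => cexp (I * k * x) with he_def
  have he : ∀ k, ‖e k‖ = 1 := fun k => by
    simpa only [he_def, mul_assoc, ofReal_mul, ofReal_intCast] using norm_exp_I_mul_ofReal (k * x)
  have he_add : ∀ m n, e (m + n) = e m * e n := fun m n => by
    simp only [he_def, ← Complex.exp_add]
    push_cast
    ring_nf
  have he_zero : e 0 = 1 := by simp [he_def]
  have hσ : ∀ k : ℤ, ‖-I * (k.sign : ℂ)‖ ≤ 1 := fun k => by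
    rcases Int.sign_trichotomy k with h | h | h <;> simp [h]
  have hcos : cos (j * x) = (e j + e (-j)) / 2 := by
    simp only [Complex.cos, he_def]
    push_cast
    ring_nf
  rw [hcos, tsum_multiplier_cos_commutator hσ he he_add ha]
  simp only [← mul_sub, mul_assoc, tsum_mul_left]
  rw [tsum_sign_add_sub_sign_mul _ hj, tsum_sign_sub_sub_sign_mul _ hj]
  simp only [zero_add, zero_sub, neg_add_cancel, sub_self, neg_add_eq_sub, he_zero, sum_sub_distrib]
  simp only [he_def]
  push_cast
  ring_nf
end

section
/- Let {z_j}_{j=1}^n be n distinct points in the open unit disk 𝔻 ⊂ ℂ. Then there exists a boundary point ω₀ ∈ ∂𝔻 and a collection of open convex sets {C_j}_{j=1}^n covering 𝔻 such that each C_j contains z_j and no other point z_k (k ≠ j), and ω₀ is an accumulation point of every C_j. -/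
/-!
Pick `ω₀` on the unit circle off every line through two of the points: a line meets a circle
in at most two points, while the circle is infinite. Seen from `ω₀` the disk lies in an open
half-plane, so the direction of the chord from `ω₀` to `w ∈ 𝔻` is measured by a real slope,
and distinct points `z_j` have distinct slopes. Let `C_j` be the set of `w ∈ 𝔻` whose slope lies
strictly between the slopes of the neighbours of `z_j`. It is open; it is convex because a ratio
of affine maps with positive denominator sends segments into intervals; and it contains the open
chord from `ω₀` to `z_j`, along which the slope is constant, so `ω₀` is in its closure.
-/

open Set

section NeighbourInterval

variable {ι α : Type*} [LinearOrder α] (f : ι → α)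

/-- For injective `f` on a finite type this is the open interval between the values of `f`
adjacent to `f j`, unbounded on a side where there is none (the paper's `(θ_{j-1}, θ_{j+1})`). -/
def neighbourInterval (j : ι) : Set α :=
  (⋂ k ∈ {k | f k < f j}, Ioi (f k)) ∩ ⋂ k ∈ {k | f j < f k}, Iio (f k)

variable {f}

theorem mem_neighbourInterval {j : ι} {x : α} :
    x ∈ neighbourInterval f j ↔ (∀ k, f k < f j → f k < x) ∧ ∀ k, f j < f k → x < f k := by
  simp [neighbourInterval]

theorem self_mem_neighbourInterval (j : ι) : f j ∈ neighbourInterval f j :=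
  mem_neighbourInterval.2 ⟨fun _ ↦ id, fun _ ↦ id⟩

theorem apply_mem_neighbourInterval_iff (hf : Function.Injective f) {j k : ι} :
    f k ∈ neighbourInterval f j ↔ k = j := by
  refine ⟨fun h ↦ hf ?_, fun h ↦ h ▸ self_mem_neighbourInterval k⟩
  rw [mem_neighbourInterval] at h
  rcases lt_trichotomy (f k) (f j) with hlt | heq | hgt
  · exact absurd (h.1 k hlt) (lt_irrefl _)
  · exact heq
  · exact absurd (h.2 k hgt) (lt_irrefl _)

theorem exists_mem_neighbourInterval [Finite ι] [Nonempty ι] (x : α) :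
    ∃ j, x ∈ neighbourInterval f j := by
  by_cases hbelow : ∃ k, f k ≤ x
  · obtain ⟨j, hjx, hjmax⟩ := exists_max_image {k | f k ≤ x} f (toFinite _) hbelow
    refine ⟨j, mem_neighbourInterval.2 ⟨fun k hk ↦ hk.trans_le hjx, fun k hk ↦ ?_⟩⟩
    by_contra! hkx
    exact (hjmax k hkx).not_gt hk
  · push Not at hbelow
    obtain ⟨j, hjmin⟩ := Finite.exists_min f
    exact ⟨j, mem_neighbourInterval.2
      ⟨fun k hk ↦ absurd (hjmin k) hk.not_ge, fun k _ ↦ hbelow k⟩⟩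

theorem ordConnected_neighbourInterval (j : ι) : (neighbourInterval f j).OrdConnected :=
  (ordConnected_biInter fun _ _ ↦ ordConnected_Ioi).inter
    (ordConnected_biInter fun _ _ ↦ ordConnected_Iio)

theorem isOpen_neighbourInterval [Finite ι] [TopologicalSpace α] [OrderClosedTopology α] (j : ι) :
    IsOpen (neighbourInterval f j) :=
  ((toFinite _).isOpen_biInter fun _ _ ↦ isOpen_Ioi).inter
    ((toFinite _).isOpen_biInter fun _ _ ↦ isOpen_Iio)

end NeighbourInterval

section AffineRatio

variable {E : Type*} [AddCommGroup E] [Module ℝ E] (p q : E →ᵃ[ℝ] ℝ)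

theorem mediant_mem_segment {a b u v x y : ℝ} (ha : 0 ≤ a) (hb : 0 ≤ b) (hab : a + b = 1)
    (hx : 0 < x) (hy : 0 < y) :
    (a * u + b * v) / (a * x + b * y) ∈ segment ℝ (u / x) (v / y) := by
  have hd : 0 < a * x + b * y := by
    rcases ha.eq_or_lt with rfl | ha'
    · simp_all
    · positivity
  refine ⟨a * x / (a * x + b * y), b * y / (a * x + b * y), by positivity, by positivity,
    by field_simp, ?_⟩
  simp only [smul_eq_mul]
  field_simp

theorem Convex.inter_preimage_div_of_ordConnected {s : Set E} (hs : Convex ℝ s)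
    (hp : ∀ x ∈ s, 0 < p x) {I : Set ℝ} (hI : I.OrdConnected) :
    Convex ℝ (s ∩ (fun x ↦ q x / p x) ⁻¹' I) := by
  rintro x ⟨hxs, hxI⟩ y ⟨hys, hyI⟩ a b ha hb hab
  refine ⟨hs hxs hys ha hb hab, ?_⟩
  simp only [mem_preimage, Convex.combo_affine_apply hab, smul_eq_mul]
  exact hI.uIcc_subset hxI hyI <| segment_subset_uIcc _ _ <|
    mediant_mem_segment ha hb hab (hp x hxs) (hp y hys)

theorem div_eq_of_mem_openSegment {x₀ x y : E} (hp : p x₀ = 0) (hq : q x₀ = 0)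
    (hy : y ∈ openSegment ℝ x₀ x) : q y / p y = q x / p x := by
  obtain ⟨a, b, -, hb, hab, rfl⟩ := hy
  simp only [Convex.combo_affine_apply hab, hp, hq, smul_eq_mul, mul_zero, zero_add]
  exact mul_div_mul_left _ _ hb.ne'

end AffineRatio

section LineMeetsSphere

variable {V P : Type*} [NormedAddCommGroup V] [InnerProductSpace ℝ V] [MetricSpace P]
  [NormedAddTorsor V P]

theorem finite_setOf_mem_sphere_collinear {a b : P} (hab : a ≠ b) (c : P) (r : ℝ) :
    {x ∈ Metric.sphere c r | Collinear ℝ {x, a, b}}.Finite := by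
  classical
  by_contra hinf
  obtain ⟨t, hts, ht⟩ := Set.Infinite.exists_subset_card_eq hinf 3
  obtain ⟨x, y, w, hxy, hxw, hyw, rfl⟩ := Finset.card_eq_three.1 ht
  simp only [Finset.coe_insert, Finset.coe_singleton, insert_subset_iff,
    singleton_subset_iff, mem_ofPred_eq] at hts
  obtain ⟨⟨hxs, hx⟩, ⟨hys, hy⟩, ⟨hws, hw⟩⟩ := hts
  have hline : ∀ u, Collinear ℝ {u, a, b} → u ∈ line[ℝ, a, b] := fun u hu ↦
    hu.mem_affineSpan_of_mem_of_ne (by simp) (by simp) (by simp) hab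
  have hcosph : EuclideanGeometry.Cospherical ({x, y, w} : Set P) :=
    ⟨c, r, by simp_all [Metric.mem_sphere]⟩
  exact affineIndependent_iff_not_collinear_set.1 (hcosph.affineIndependent_of_ne hxy hxw hyw)
    (collinear_triple_of_mem_affineSpan_pair (hline x hx) (hline y hy) (hline w hw))

end LineMeetsSphere

theorem exists_norm_eq_one_forall_not_collinear {ι : Type*} [Finite ι] (z : ι → ℂ) :
    ∃ ω : ℂ, ‖ω‖ = 1 ∧ ∀ j k, z j ≠ z k → ¬Collinear ℝ {ω, z j, z k} := by
  have hcircle : (Metric.sphere (0 : ℂ) 1).Infinite :=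
    (isPreconnected_sphere (Complex.rank_real_complex ▸ Nat.one_lt_ofNat) 0 1
      |>.infinite_of_nontrivial ⟨1, by simp, -1, by simp, by norm_num⟩)
  have hbad : (⋃ (j) (k) (_ : z j ≠ z k),
      {ω ∈ Metric.sphere (0 : ℂ) 1 | Collinear ℝ {ω, z j, z k}}).Finite :=
    finite_iUnion fun j ↦ finite_iUnion fun k ↦ finite_iUnion fun hjk ↦
      finite_setOf_mem_sphere_collinear hjk 0 1
  obtain ⟨ω, hω, hgood⟩ := (hcircle.sdiff hbad).nonempty
  refine ⟨ω, by simpa using hω, fun j k hjk hcol ↦ hgood ?_⟩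
  exact mem_iUnion₂.2 ⟨j, k, mem_iUnion.2 ⟨hjk, hω, hcol⟩⟩

namespace Chord

open Complex Metric

variable {ω w z : ℂ}

/- `depth ω w` and `offset ω w` are the coordinates of `w - ω` along the inward normal `-ω` and
the tangent `I * ω` at `ω` (see `sub_eq_coords_mul`), so `slope ω w` is the tangent of the angle
at `ω` between the chord from `ω` to `w` and the diameter through `ω`. -/
noncomputable def depth (ω : ℂ) : ℂ →ᵃ[ℝ] ℝ :=
  AffineMap.const ℝ ℂ (1 : ℝ) - (innerₛₗ ℝ ω).toAffineMap

noncomputable def offset (ω : ℂ) : ℂ →ᵃ[ℝ] ℝ := (innerₛₗ ℝ (I * ω)).toAffineMap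

noncomputable def slope (ω w : ℂ) : ℝ := offset ω w / depth ω w

noncomputable def sector (ω : ℂ) (S : Set ℝ) : Set ℂ := ball 0 1 ∩ slope ω ⁻¹' S

theorem depth_apply : depth ω w = 1 - inner ℝ ω w := rfl

theorem offset_apply : offset ω w = inner ℝ (I * ω) w := rfl

theorem depth_pos (hω : ‖ω‖ ≤ 1) (hw : w ∈ ball (0 : ℂ) 1) : 0 < depth ω w := by
  rw [mem_ball_zero_iff] at hw
  have := real_inner_le_norm ω w
  rw [depth_apply]
  nlinarith [norm_nonneg w]

theorem depth_self (hω : ‖ω‖ = 1) : depth ω ω = 0 := by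
  simp [depth_apply, hω]

theorem offset_self : offset ω ω = 0 := by
  simp [offset_apply, Complex.inner]
  ring

theorem sub_eq_coords_mul (hω : ‖ω‖ = 1) : w - ω = (offset ω w * I - depth ω w) * ω := by
  have h : ω.re * ω.re + ω.im * ω.im = 1 := by
    rw [← Complex.normSq_apply, Complex.normSq_eq_norm_sq, hω, one_pow]
  apply Complex.ext <;> simp [depth_apply, offset_apply, Complex.inner]
  · linear_combination -w.re * h
  · linear_combination -w.im * h

theorem collinear_of_slope_eq (hω : ‖ω‖ = 1) (hz : z ∈ ball (0 : ℂ) 1) (hw : w ∈ ball (0 : ℂ) 1)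
    (h : slope ω z = slope ω w) : Collinear ℝ {ω, z, w} := by
  have hz₀ := (depth_pos hω.le hz).ne'
  have hw₀ := (depth_pos hω.le hw).ne'
  have hoffset : offset ω w = depth ω w / depth ω z * offset ω z := by
    rw [slope, slope, div_eq_div_iff hz₀ hw₀] at h
    field_simp
    linarith
  have hparallel : w - ω = ((depth ω w / depth ω z : ℝ) : ℂ) * (z - ω) := by
    have hz₀' : (depth ω z : ℂ) ≠ 0 := by exact_mod_cast hz₀
    rw [sub_eq_coords_mul hω (w := w), sub_eq_coords_mul hω (w := z), hoffset]
    push_cast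
    field_simp
  rw [collinear_iff_of_mem (mem_insert ω _)]
  refine ⟨z - ω, ?_⟩
  simp only [mem_insert_iff, mem_singleton_iff, forall_eq_or_imp, forall_eq, vadd_eq_add]
  refine ⟨⟨0, by simp⟩, ⟨1, by simp⟩, ⟨depth ω w / depth ω z, ?_⟩⟩
  rw [Complex.real_smul]
  linear_combination hparallel

theorem isOpen_sector (hω : ‖ω‖ ≤ 1) {S : Set ℝ} (hS : IsOpen S) : IsOpen (sector ω S) := by
  refine ContinuousOn.isOpen_inter_preimage ?_ isOpen_ball hS
  exact ((offset ω).continuous_of_finiteDimensional.continuousOn.div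
    (depth ω).continuous_of_finiteDimensional.continuousOn fun w hw ↦ (depth_pos hω hw).ne')

theorem convex_sector (hω : ‖ω‖ ≤ 1) {S : Set ℝ} (hS : S.OrdConnected) :
    Convex ℝ (sector ω S) :=
  (convex_ball 0 1).inter_preimage_div_of_ordConnected (depth ω) (offset ω)
    (fun _ hw ↦ depth_pos hω hw) hS

theorem openSegment_subset_sector (hω : ‖ω‖ = 1) {S : Set ℝ} (hz : z ∈ sector ω S) :
    openSegment ℝ ω z ⊆ sector ω S := by
  intro w hw
  refine ⟨?_, ?_⟩
  · rw [← isOpen_ball.interior_eq]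
    refine (convex_ball (0 : ℂ) 1).openSegment_closure_interior_subset_interior ?_ ?_ hw
    · rw [closure_ball _ one_ne_zero, mem_closedBall_zero_iff, hω]
    · rw [isOpen_ball.interior_eq]
      exact hz.1
  · rw [mem_preimage, slope, div_eq_of_mem_openSegment (depth ω) (offset ω) (depth_self hω)
      offset_self hw]
    exact hz.2

theorem self_mem_closure_sector_diff_singleton (hω : ‖ω‖ = 1) {S : Set ℝ}
    (hz : z ∈ sector ω S) : ω ∈ closure (sector ω S \ {ω}) := by
  have hω_notMem : ω ∉ sector ω S := fun h ↦ by simpa [hω] using h.1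
  rw [sdiff_singleton_eq_self hω_notMem]
  exact closure_mono (openSegment_subset_sector hω hz)
    (segment_subset_closure_openSegment (left_mem_segment ℝ ω z))

end Chord

open Chord

/-- geometric covering lemma.  Let `z₁, …, z_n` (`n ≥ 1`) be distinct
points of the open unit disk `𝔻 ⊆ ℂ`.  Then there exist a boundary point `ω₀ ∈ ∂𝔻`
(`‖ω₀‖ = 1`) and open convex sets `C₁, …, C_n` covering `𝔻` such that each `C_j` contains
`z_j` and no other point `z_k` (`k ≠ j`), and `ω₀` is an accumulation point of every `C_j`. -/
theorem stmt10 (n : ℕ) (hn : 1 ≤ n) (z : Fin n → ℂ) (hinj : Function.Injective z)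
    (hzball : ∀ j, z j ∈ Metric.ball (0 : ℂ) 1) :
    ∃ ω₀ : ℂ, ‖ω₀‖ = 1 ∧
      ∃ C : Fin n → Set ℂ,
        (∀ j, IsOpen (C j)) ∧ (∀ j, Convex ℝ (C j)) ∧
        Metric.ball (0 : ℂ) 1 ⊆ ⋃ j, C j ∧
        (∀ j k, z k ∈ C j ↔ k = j) ∧
        (∀ j, ω₀ ∈ closure (C j \ {ω₀})) := by
  have : Nonempty (Fin n) := ⟨⟨0, hn⟩⟩
  obtain ⟨ω₀, hω₀, hgood⟩ := exists_norm_eq_one_forall_not_collinear z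
  set s : Fin n → ℝ := fun j ↦ slope ω₀ (z j)
  have hs : Function.Injective s := fun j k hjk ↦ hinj <| by_contra fun hne ↦
    hgood j k hne (collinear_of_slope_eq hω₀ (hzball j) (hzball k) hjk)
  refine ⟨ω₀, hω₀, fun j ↦ sector ω₀ (neighbourInterval s j),
    fun j ↦ isOpen_sector hω₀.le (isOpen_neighbourInterval j),
    fun j ↦ convex_sector hω₀.le (ordConnected_neighbourInterval j), fun w hw ↦ ?_,
    fun j k ↦ ?_,
    fun j ↦ self_mem_closure_sector_diff_singleton hω₀ ⟨hzball j, self_mem_neighbourInterval j⟩⟩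
  · obtain ⟨j, hj⟩ := exists_mem_neighbourInterval (f := s) (slope ω₀ w)
    exact mem_iUnion.2 ⟨j, hw, hj⟩
  · simpa [sector, hzball k] using apply_mem_neighbourInterval_iff hs
end

section
/- Let λ₀ ∈ ℂ, let V be a neighborhood of λ₀, let M : V → ℂ^{r×r} be continuous, and suppose there are constants 0 < σ̄₁ < σ̲₂ such that the smallest singular value σ₁(M(λ)) ≤ σ̄₁ and the second smallest singular value σ₂(M(λ)) ≥ σ̲₂ for all λ ∈ V. Define the regularized pseudoinverse M†(λ) := M(λ)*·(M(λ)M(λ)* + P_{U₁}(λ))^{-1}·(I - P_{U₁}(λ)), where P_{U₁} is the orthogonal projection onto the left singular space of σ₁. Then M† is well defined and for each fixed λ: (i) P_{V₁}·M† = 0 where P_{V₁} is the projection onto the right singular space of σ₁; (ii) M·M† = I - P_{U₁}; (iii) ‖M†(λ)u‖ ≤ ‖u‖/σ̲₂ for all u ∈ ℂ^r. -/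
open Matrix

/-- The rank-one orthogonal projector `u₁ u₁*` onto the first column `u₁` of `U`. -/
noncomputable def projFirst {r : ℕ} [NeZero r] (U : Matrix (Fin r) (Fin r) ℂ) :
    Matrix (Fin r) (Fin r) ℂ :=
  Matrix.vecMulVec (fun i => U i 0) (star fun i => U i 0)

/-- The regularized pseudoinverse `M† = M* (M M* + P_{U₁})⁻¹ (I - P_{U₁})`. -/
noncomputable def pseudoInvReg {r : ℕ} [NeZero r] (M U : Matrix (Fin r) (Fin r) ℂ) :
    Matrix (Fin r) (Fin r) ℂ :=
  Mᴴ * (M * Mᴴ + projFirst U)⁻¹ * (1 - projFirst U)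

lemma conjmul {r : ℕ} (A B C : Matrix (Fin r) (Fin r) ℂ) (h : Aᴴ * A = 1)
    (a b : Fin r → ℂ) :
    (B * Matrix.diagonal a * Aᴴ) * (A * Matrix.diagonal b * C) =
      B * Matrix.diagonal (fun i => a i * b i) * C := by
  calc (B * Matrix.diagonal a * Aᴴ) * (A * Matrix.diagonal b * C)
      = B * Matrix.diagonal a * (Aᴴ * A) * Matrix.diagonal b * C := by
        simp only [Matrix.mul_assoc]
    _ = B * Matrix.diagonal (fun i => a i * b i) * C := by
        rw [h, Matrix.mul_one, Matrix.mul_assoc B, Matrix.diagonal_mul_diagonal]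

lemma dot_sum_sq {r : ℕ} (y : Fin r → ℂ) : (star y ⬝ᵥ y).re = ∑ i, ‖y i‖ ^ 2 := by
  simp [dotProduct, Complex.mul_re, ← Complex.normSq_apply, Complex.sq_norm,
    Complex.normSq_apply, norm_pow]

lemma unitary_sum_sq {r : ℕ} (A : Matrix (Fin r) (Fin r) ℂ) (h : Aᴴ * A = 1)
    (x : Fin r → ℂ) : ∑ i, ‖A.mulVec x i‖ ^ 2 = ∑ i, ‖x i‖ ^ 2 := by
  rw [← dot_sum_sq, ← dot_sum_sq]
  congr 1
  rw [Matrix.star_mulVec, Matrix.dotProduct_mulVec, Matrix.vecMul_vecMul, h, Matrix.vecMul_one]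

lemma projFirst_eq {r : ℕ} [NeZero r] (U : Matrix (Fin r) (Fin r) ℂ) :
    projFirst U = U * Matrix.diagonal (fun i : Fin r => if i = 0 then (1:ℂ) else 0) * Uᴴ := by
  ext i j
  simp [projFirst, Matrix.vecMulVec_apply, Matrix.mul_apply, Matrix.diagonal_apply,
    ite_mul, mul_ite, Finset.sum_ite_eq]

/-- regularized pseudoinverse.  Let `M : V → ℂ^{r×r}` be continuous
on a neighborhood `V` of `lam0` and suppose `0 < sbar1 < slow2` are such that for every `λ ∈ V`
the smallest singular value of `M(λ)` is `≤ sbar1` and the second smallest is `≥ slow2`.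
Then, at each fixed `λ ∈ V`, writing a singular value decomposition
`M(λ) = U · diag σ · W*` (with `U, W` unitary, `σ ≥ 0`, `σ 0 ≤ sbar1` and `σ i ≥ slow2` for
`i ≠ 0`), the regularized pseudoinverse `M† = M* (M M* + P_{U₁})⁻¹ (I - P_{U₁})` is well
defined (i.e. `M M* + P_{U₁}` is invertible) and satisfies:
(i) `P_{V₁} · M† = 0`; (ii) `M · M† = I - P_{U₁}`;
(iii) `‖M† u‖ ≤ ‖u‖ / slow2` for all `u ∈ ℂ^r` (Euclidean norms). -/
theorem stmt11 (r : ℕ) [NeZero r] (lam0 : ℂ) (V : Set ℂ) (hV : V ∈ nhds lam0)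
    (M : ℂ → Matrix (Fin r) (Fin r) ℂ) (hM : ContinuousOn M V)
    (sbar1 slow2 : ℝ) (h1 : 0 < sbar1) (h12 : sbar1 < slow2) :
    ∀ l ∈ V, ∀ (U W : Matrix (Fin r) (Fin r) ℂ) (σ : Fin r → ℝ),
      U ∈ Matrix.unitaryGroup (Fin r) ℂ →
      W ∈ Matrix.unitaryGroup (Fin r) ℂ →
      (∀ i, 0 ≤ σ i) →
      M l = U * Matrix.diagonal (fun i => (σ i : ℂ)) * Wᴴ →
      σ 0 ≤ sbar1 →
      (∀ i : Fin r, i ≠ 0 → slow2 ≤ σ i) →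
      IsUnit (M l * (M l)ᴴ + projFirst U) ∧
      projFirst W * pseudoInvReg (M l) U = 0 ∧
      M l * pseudoInvReg (M l) U = 1 - projFirst U ∧
      ∀ u : Fin r → ℂ,
        Real.sqrt (∑ i, ‖(pseudoInvReg (M l) U).mulVec u i‖ ^ 2) ≤
          Real.sqrt (∑ i, ‖u i‖ ^ 2) / slow2 := by
  intro l hl U W σ hU hW hσ0 hMeq hσ1 hσ2
  have hslow : 0 < slow2 := h1.trans h12
  have hU1 : Uᴴ * U = 1 := by
    simpa [Matrix.star_eq_conjTranspose] using Matrix.mem_unitaryGroup_iff'.mp hU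
  have hU2 : U * Uᴴ = 1 := by
    simpa [Matrix.star_eq_conjTranspose] using Matrix.mem_unitaryGroup_iff.mp hU
  have hW1 : Wᴴ * W = 1 := by
    simpa [Matrix.star_eq_conjTranspose] using Matrix.mem_unitaryGroup_iff'.mp hW
  set e : Fin r → ℝ := fun i => if i = 0 then 1 else 0 with he
  set d : Fin r → ℝ := fun i => σ i ^ 2 + e i with hd
  set g : Fin r → ℝ := fun i => if i = 0 then 0 else (σ i)⁻¹ with hg
  have hσpos : ∀ i : Fin r, i ≠ 0 → 0 < σ i := fun i hi => hslow.trans_le (hσ2 i hi)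
  have hdpos : ∀ i, 0 < d i := by
    intro i
    rcases eq_or_ne i 0 with hi | hi
    · have h2 : e i = 1 := by simp [he, hi]
      have h3 := sq_nonneg (σ i)
      simp only [hd]
      rw [h2]
      linarith
    · have h2 : e i = 0 := by simp [he, hi]
      simp only [hd]
      rw [h2]
      simpa using pow_pos (hσpos i hi) 2
  have hecast : (fun i : Fin r => if i = 0 then (1:ℂ) else 0) = fun i => ((e i : ℝ) : ℂ) := by
    funext i
    by_cases hi : i = 0 <;> simp [he, hi]
  have hPU : projFirst U = U * Matrix.diagonal (fun i => (e i : ℂ)) * Uᴴ := by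
    rw [projFirst_eq, hecast]
  have hPW : projFirst W = W * Matrix.diagonal (fun i => (e i : ℂ)) * Wᴴ := by
    rw [projFirst_eq, hecast]
  have hMH : (M l)ᴴ = W * Matrix.diagonal (fun i => (σ i : ℂ)) * Uᴴ := by
    rw [hMeq]
    simp [Matrix.conjTranspose_mul, Matrix.diagonal_conjTranspose, Matrix.mul_assoc,
      Pi.star_def, Complex.star_def, Complex.conj_ofReal]
  have hMM : M l * (M l)ᴴ = U * Matrix.diagonal (fun i => (σ i : ℂ) * (σ i : ℂ)) * Uᴴ := by
    rw [hMH, hMeq, conjmul W U Uᴴ hW1]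
  have hdcast : (fun i => (σ i : ℂ) * (σ i : ℂ) + ((e i : ℝ) : ℂ)) = fun i => ((d i : ℝ) : ℂ) := by
    funext i
    simp only [hd]
    push_cast
    ring
  have hSum : M l * (M l)ᴴ + projFirst U = U * Matrix.diagonal (fun i => (d i : ℂ)) * Uᴴ := by
    rw [hMM, hPU, ← Matrix.add_mul, ← Matrix.mul_add, Matrix.diagonal_add, ← hdcast]
  have hone : (1 : Matrix (Fin r) (Fin r) ℂ) = U * Matrix.diagonal (fun _ => (1:ℂ)) * Uᴴ := by
    rw [Matrix.diagonal_one, Matrix.mul_one, hU2]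
  have hdd : (fun i => ((d i : ℝ) : ℂ) * ((d i : ℝ) : ℂ)⁻¹) = fun _ => (1:ℂ) := by
    funext i
    exact mul_inv_cancel₀ (by exact_mod_cast (hdpos i).ne')
  have hinv_right : (U * Matrix.diagonal (fun i => (d i : ℂ)) * Uᴴ) *
      (U * Matrix.diagonal (fun i => (d i : ℂ)⁻¹) * Uᴴ) = 1 := by
    rw [conjmul U U Uᴴ hU1, hdd, Matrix.diagonal_one, Matrix.mul_one, hU2]
  have hAunit : IsUnit (M l * (M l)ᴴ + projFirst U) := by
    rw [hSum]
    exact @isUnit_of_invertible _ _ _ (invertibleOfRightInverse _ _ hinv_right)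
  have hAinv : (M l * (M l)ᴴ + projFirst U)⁻¹ =
      U * Matrix.diagonal (fun i => (d i : ℂ)⁻¹) * Uᴴ := by
    rw [hSum]
    exact Matrix.inv_eq_right_inv hinv_right
  have hsubcast : (fun i => (1:ℂ) - ((e i : ℝ) : ℂ)) = fun i => (((1 - e i : ℝ)) : ℂ) := by
    funext i
    push_cast
    ring
  have hone_sub : 1 - projFirst U =
      U * Matrix.diagonal (fun i => ((1 - e i : ℝ) : ℂ)) * Uᴴ := by
    conv_lhs => rw [hone, hPU]
    rw [← Matrix.sub_mul, ← Matrix.mul_sub, Matrix.diagonal_sub, ← hsubcast]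
  have hgcast : (fun i => ((σ i : ℂ) * ((d i : ℝ) : ℂ)⁻¹) * (((1 - e i : ℝ)) : ℂ)) =
      fun i => ((g i : ℝ) : ℂ) := by
    funext i
    by_cases hi : i = 0
    · simp [hg, he, hi]
    · have hσ : (σ i : ℂ) ≠ 0 := by exact_mod_cast (hσpos i hi).ne'
      have h2 : e i = 0 := by simp [he, hi]
      have h3 : g i = (σ i)⁻¹ := by simp [hg, hi]
      simp only [hd, h2, h3]
      push_cast
      field_simp
      ring
  have hpseudo : pseudoInvReg (M l) U = W * Matrix.diagonal (fun i => (g i : ℂ)) * Uᴴ := by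
    unfold pseudoInvReg
    rw [hAinv, hMH, hone_sub, conjmul U W Uᴴ hU1, conjmul U W Uᴴ hU1, hgcast]
  refine ⟨hAunit, ?_, ?_, ?_⟩
  · rw [hPW, hpseudo, conjmul W W Uᴴ hW1]
    have h0 : (fun i => (e i : ℂ) * (g i : ℂ)) = fun _ => (0:ℂ) := by
      funext i
      by_cases hi : i = 0 <;> simp [he, hg, hi]
    rw [h0, Matrix.diagonal_zero, Matrix.mul_zero, Matrix.zero_mul]
  · rw [hpseudo, hMeq, conjmul W U Uᴴ hW1, hone_sub]
    have h0 : (fun i => (σ i : ℂ) * (g i : ℂ)) = fun i => (((1 - e i : ℝ)) : ℂ) := by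
      funext i
      by_cases hi : i = 0
      · simp [hg, he, hi]
      · have hσ : (σ i : ℂ) ≠ 0 := by exact_mod_cast (hσpos i hi).ne'
        simp [hg, he, hi, mul_inv_cancel₀ hσ]
    rw [h0]
  · intro u
    have hgbound : ∀ i, ‖(g i : ℂ)‖ ≤ slow2⁻¹ := by
      intro i
      rw [Complex.norm_real, Real.norm_eq_abs]
      by_cases hi : i = 0
      · have h3 : g i = 0 := by simp [hg, hi]
        rw [h3, abs_zero]
        positivity
      · have h3 : g i = (σ i)⁻¹ := by simp [hg, hi]
        rw [h3, abs_of_nonneg (inv_nonneg.mpr (hσ0 i))]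
        exact inv_anti₀ hslow (hσ2 i hi)
    set v : Fin r → ℂ := Uᴴ.mulVec u with hv
    have hvu : ∑ i, ‖v i‖ ^ 2 = ∑ i, ‖u i‖ ^ 2 := by
      rw [hv]
      exact unitary_sum_sq Uᴴ (by rw [Matrix.conjTranspose_conjTranspose, hU2]) u
    have hmv : (pseudoInvReg (M l) U).mulVec u =
        W.mulVec ((Matrix.diagonal (fun i => (g i : ℂ))).mulVec v) := by
      rw [hpseudo, hv, ← Matrix.mulVec_mulVec, ← Matrix.mulVec_mulVec]
    have hsum1 : ∑ i, ‖(pseudoInvReg (M l) U).mulVec u i‖ ^ 2 =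
        ∑ i, ‖(Matrix.diagonal (fun i => (g i : ℂ))).mulVec v i‖ ^ 2 := by
      rw [hmv]
      exact unitary_sum_sq W hW1 _
    have hsum2 : ∑ i, ‖(Matrix.diagonal (fun i => (g i : ℂ))).mulVec v i‖ ^ 2 ≤
        slow2⁻¹ ^ 2 * ∑ i, ‖u i‖ ^ 2 := by
      rw [← hvu, Finset.mul_sum]
      apply Finset.sum_le_sum
      intro i _
      rw [Matrix.mulVec_diagonal, norm_mul, mul_pow]
      apply mul_le_mul_of_nonneg_right _ (pow_nonneg (norm_nonneg _) 2)
      exact pow_le_pow_left₀ (norm_nonneg _) (hgbound i) 2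
    calc Real.sqrt (∑ i, ‖(pseudoInvReg (M l) U).mulVec u i‖ ^ 2)
        ≤ Real.sqrt (slow2⁻¹ ^ 2 * ∑ i, ‖u i‖ ^ 2) := by
          apply Real.sqrt_le_sqrt
          rw [hsum1]
          exact hsum2
      _ = Real.sqrt (∑ i, ‖u i‖ ^ 2) / slow2 := by
          rw [Real.sqrt_mul (by positivity), Real.sqrt_sq (by positivity)]
          rw [inv_mul_eq_div]
end

section
/- Let β : ℝ → ℝ be continuous and define, for g ∈ L²([-π,π]), the operator Jg(x) = Π(x)·∫₀ˣ β(y)·g(y)/Π(y) dy where Π(x) = exp(i∫₀ˣ β(y)dy). Assume β is even and let κ₁(x) := ∫₀ˣ β(y)² dy. Then ‖Jg‖²_{L²([-π,π])} ≤ ‖κ₁‖_{L¹([0,π])}·‖g‖²_{L²([-π,π])}. -/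
/-!
Since `β` is real, `|Π| = 1`, so `|Jg(x)|` is the modulus of `∫₀ˣ h` with `|h| = |β| |g|`.
Cauchy–Schwarz on `[0, x]` bounds `|Jg(x)|²` by `κ₁(x) ∫₀ˣ |g|² ≤ κ₁(x) ∫₀^π |g|²`, and
integrating over `x ∈ [0, π]` gives the bound on the right half. Reflecting `x ↦ -x` turns the
left half into the same situation, because the evenness of `β` makes `∫ₓ⁰ β² = κ₁(-x)`.
-/

open MeasureTheory Set intervalIntegral

section

variable {E F G : Type*} [NormedAddCommGroup E] [NormedAddCommGroup F] [NormedAddCommGroup G]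

theorem sq_integral_norm_mul_norm_le {α : Type*} [MeasurableSpace α] {μ : Measure α}
    {f : α → E} {g : α → F} (hf : MemLp f 2 μ) (hg : MemLp g 2 μ) :
    (∫ a, ‖f a‖ * ‖g a‖ ∂μ) ^ 2 ≤ (∫ a, ‖f a‖ ^ 2 ∂μ) * ∫ a, ‖g a‖ ^ 2 ∂μ := by
  have two : ENNReal.ofReal 2 = 2 := by norm_num
  have holder := integral_mul_norm_le_Lp_mul_Lq (μ := μ) Real.HolderConjugate.two_two
    (two ▸ hf.norm) (two ▸ hg.norm)
  simp only [norm_norm, Real.rpow_two, ← Real.sqrt_eq_rpow] at holder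
  calc (∫ a, ‖f a‖ * ‖g a‖ ∂μ) ^ 2
      ≤ (√(∫ a, ‖f a‖ ^ 2 ∂μ) * √(∫ a, ‖g a‖ ^ 2 ∂μ)) ^ 2 :=
        pow_le_pow_left₀ (MeasureTheory.integral_nonneg fun _ => by positivity) holder 2
    _ = (∫ a, ‖f a‖ ^ 2 ∂μ) * ∫ a, ‖g a‖ ^ 2 ∂μ := by
        rw [mul_pow, Real.sq_sqrt (MeasureTheory.integral_nonneg fun _ => by positivity),
          Real.sq_sqrt (MeasureTheory.integral_nonneg fun _ => by positivity)]

variable {μ : Measure ℝ} {a b : ℝ} {f : ℝ → E} {g : ℝ → F} {h : ℝ → G}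

theorem intervalIntegrable_norm_mul_norm (hf : AEStronglyMeasurable f μ)
    (hf2 : IntervalIntegrable (fun y => ‖f y‖ ^ 2) μ a b) (hg : AEStronglyMeasurable g μ)
    (hg2 : IntervalIntegrable (fun y => ‖g y‖ ^ 2) μ a b) :
    IntervalIntegrable (fun y => ‖f y‖ * ‖g y‖) μ a b :=
  (hf2.add hg2).mono_fun' (hf.norm.mul hg.norm).restrict <| ae_of_all _ fun y => by
    simp only [norm_mul, norm_norm]
    nlinarith [two_mul_le_add_sq ‖f y‖ ‖g y‖, norm_nonneg (f y), norm_nonneg (g y)]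

theorem IntervalIntegrable.of_norm_le_mul (hf : AEStronglyMeasurable f μ)
    (hf2 : IntervalIntegrable (fun y => ‖f y‖ ^ 2) μ a b) (hg : AEStronglyMeasurable g μ)
    (hg2 : IntervalIntegrable (fun y => ‖g y‖ ^ 2) μ a b) (hh : AEStronglyMeasurable h μ)
    (hfg : ∀ y, ‖h y‖ ≤ ‖f y‖ * ‖g y‖) : IntervalIntegrable h μ a b :=
  (intervalIntegrable_norm_mul_norm hf hf2 hg hg2).mono_fun' hh.restrict (ae_of_all _ hfg)

variable [NormedSpace ℝ G]

theorem sq_norm_intervalIntegral_le_of_norm_le_mul (hab : a ≤ b) (hf : AEStronglyMeasurable f μ)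
    (hf2 : IntervalIntegrable (fun y => ‖f y‖ ^ 2) μ a b) (hg : AEStronglyMeasurable g μ)
    (hg2 : IntervalIntegrable (fun y => ‖g y‖ ^ 2) μ a b) (hfg : ∀ y, ‖h y‖ ≤ ‖f y‖ * ‖g y‖) :
    ‖∫ y in a..b, h y ∂μ‖ ^ 2 ≤ (∫ y in a..b, ‖f y‖ ^ 2 ∂μ) * ∫ y in a..b, ‖g y‖ ^ 2 ∂μ := by
  have hfL2 : MemLp f 2 (μ.restrict (Ioc a b)) :=
    (memLp_two_iff_integrable_sq_norm hf.restrict).mpr hf2.1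
  have hgL2 : MemLp g 2 (μ.restrict (Ioc a b)) :=
    (memLp_two_iff_integrable_sq_norm hg.restrict).mpr hg2.1
  have hnorm : ‖∫ y in a..b, h y ∂μ‖ ≤ ∫ y in a..b, ‖f y‖ * ‖g y‖ ∂μ :=
    intervalIntegral.norm_integral_le_of_norm_le hab (ae_of_all _ fun y _ => hfg y)
      (intervalIntegrable_norm_mul_norm hf hf2 hg hg2)
  simp only [integral_of_le hab] at hnorm ⊢
  exact (pow_le_pow_left₀ (norm_nonneg _) hnorm 2).trans (sq_integral_norm_mul_norm_le hfL2 hgL2)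

theorem intervalIntegrable_sq_norm_primitive [NullSingletonClass μ] [IsLocallyFiniteMeasure μ]
    {c : ℝ} (hh : IntervalIntegrable h μ a b) (hc : c ∈ uIcc a b) :
    IntervalIntegrable (fun x => ‖∫ y in c..x, h y ∂μ‖ ^ 2) μ a b :=
  ((continuousOn_primitive_interval' hh hc).norm.pow 2).intervalIntegrable

theorem integral_sq_norm_primitive_le [NullSingletonClass μ] [IsLocallyFiniteMeasure μ] {L : ℝ}
    (hL : 0 ≤ L) (hf : AEStronglyMeasurable f μ)
    (hf2 : IntervalIntegrable (fun y => ‖f y‖ ^ 2) μ 0 L) (hg : AEStronglyMeasurable g μ)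
    (hg2 : IntervalIntegrable (fun y => ‖g y‖ ^ 2) μ 0 L) (hh : AEStronglyMeasurable h μ)
    (hfg : ∀ y, ‖h y‖ ≤ ‖f y‖ * ‖g y‖) :
    ∫ x in 0..L, ‖∫ y in 0..x, h y ∂μ‖ ^ 2 ∂μ ≤
      (∫ x in 0..L, ∫ y in 0..x, ‖f y‖ ^ 2 ∂μ ∂μ) * ∫ x in 0..L, ‖g x‖ ^ 2 ∂μ := by
  have hsub : ∀ x ∈ Icc 0 L, uIcc 0 x ⊆ uIcc 0 L := fun x hx =>
    uIcc_subset_uIcc_left (by rwa [uIcc_of_le hL])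
  have hbound : ∀ x ∈ Icc 0 L, ‖∫ y in 0..x, h y ∂μ‖ ^ 2 ≤
      (∫ y in 0..x, ‖f y‖ ^ 2 ∂μ) * ∫ y in 0..L, ‖g y‖ ^ 2 ∂μ := fun x hx =>
    calc ‖∫ y in 0..x, h y ∂μ‖ ^ 2
        ≤ (∫ y in 0..x, ‖f y‖ ^ 2 ∂μ) * ∫ y in 0..x, ‖g y‖ ^ 2 ∂μ :=
          sq_norm_intervalIntegral_le_of_norm_le_mul hx.1 hf (hf2.mono_set (hsub x hx)) hg
            (hg2.mono_set (hsub x hx)) hfg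
      _ ≤ (∫ y in 0..x, ‖f y‖ ^ 2 ∂μ) * ∫ y in 0..L, ‖g y‖ ^ 2 ∂μ :=
          mul_le_mul_of_nonneg_left
            (integral_mono_interval le_rfl hx.1 hx.2 (ae_of_all _ fun _ => by positivity) hg2)
            (intervalIntegral.integral_nonneg hx.1 fun _ _ => by positivity)
  have hκ : ContinuousOn (fun x => ∫ y in 0..x, ‖f y‖ ^ 2 ∂μ) (uIcc 0 L) :=
    continuousOn_primitive_interval' hf2 left_mem_uIcc
  calc ∫ x in 0..L, ‖∫ y in 0..x, h y ∂μ‖ ^ 2 ∂μ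
      ≤ ∫ x in 0..L, (∫ y in 0..x, ‖f y‖ ^ 2 ∂μ) * ∫ y in 0..L, ‖g y‖ ^ 2 ∂μ ∂μ :=
        integral_mono_on hL (intervalIntegrable_sq_norm_primitive
          (.of_norm_le_mul hf hf2 hg hg2 hh hfg) left_mem_uIcc)
          (hκ.mul continuousOn_const).intervalIntegrable hbound
    _ = _ := integral_mul_const _ _

theorem integral_sq_norm_primitive_le_of_even {L : ℝ} (hL : 0 ≤ L)
    (hf : AEStronglyMeasurable f volume) (hf_even : ∀ y, ‖f (-y)‖ = ‖f y‖)
    (hf2 : IntervalIntegrable (fun y => ‖f y‖ ^ 2) volume (-L) L)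
    (hg : AEStronglyMeasurable g volume)
    (hg2 : IntervalIntegrable (fun y => ‖g y‖ ^ 2) volume (-L) L)
    (hh : AEStronglyMeasurable h volume) (hfg : ∀ y, ‖h y‖ ≤ ‖f y‖ * ‖g y‖) :
    ∫ x in -L..L, ‖∫ y in 0..x, h y‖ ^ 2 ≤
      (∫ x in 0..L, ∫ y in 0..x, ‖f y‖ ^ 2) * ∫ x in -L..L, ‖g x‖ ^ 2 := by
  have h0 : (0 : ℝ) ∈ uIcc (-L) L := by rw [uIcc_of_le (by linarith)]; constructor <;> linarith
  have hleft : uIcc (-L) 0 ⊆ uIcc (-L) L := uIcc_subset_uIcc left_mem_uIcc h0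
  have hright : uIcc 0 L ⊆ uIcc (-L) L := uIcc_subset_uIcc h0 right_mem_uIcc
  have hprim := intervalIntegrable_sq_norm_primitive (.of_norm_le_mul hf hf2 hg hg2 hh hfg) h0
  have hpos := integral_sq_norm_primitive_le hL hf (hf2.mono_set hright) hg
    (hg2.mono_set hright) hh hfg
  have hneg : ∫ x in -L..0, ‖∫ y in 0..x, h y‖ ^ 2 ≤
      (∫ x in 0..L, ∫ y in 0..x, ‖f y‖ ^ 2) * ∫ x in -L..0, ‖g x‖ ^ 2 := by
    have hneg_qmp := (Measure.measurePreserving_neg (volume : Measure ℝ)).quasiMeasurePreserving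
    have hg2_neg : IntervalIntegrable (fun y => ‖g (-y)‖ ^ 2) volume 0 L := by
      simpa using ((IntervalIntegrable.iff_comp_neg).mp (hg2.mono_set hleft)).symm
    have hreflect : ∀ x, ‖∫ y in 0..x, h (-y)‖ = ‖∫ y in 0..-x, h y‖ := fun x => by
      rw [intervalIntegral.integral_comp_neg, neg_zero, integral_symm, norm_neg]
    have := integral_sq_norm_primitive_le hL hf (hf2.mono_set hright)
      (hg.comp_quasiMeasurePreserving hneg_qmp) hg2_neg (hh.comp_quasiMeasurePreserving hneg_qmp)
      (fun y => by simpa only [Function.comp_apply, hf_even] using hfg (-y))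
    simp only [Function.comp_apply, hreflect] at this
    rwa [intervalIntegral.integral_comp_neg (fun x => ‖∫ y in 0..x, h y‖ ^ 2),
      intervalIntegral.integral_comp_neg (fun x => ‖g x‖ ^ 2), neg_zero] at this
  rw [← integral_add_adjacent_intervals (hprim.mono_set hleft) (hprim.mono_set hright),
    ← integral_add_adjacent_intervals (hg2.mono_set hleft) (hg2.mono_set hright), mul_add]
  exact add_le_add hneg hpos

end

/-- `L²` bound for the Duhamel-type operator `J`.
Let `β : ℝ → ℝ` be continuous and even, set `Π(x) = exp(i ∫₀ˣ β)` and, for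
`g ∈ L²([-π,π])`, `Jg(x) = Π(x)·∫₀ˣ β(y) g(y)/Π(y) dy`.  With
`κ₁(x) = ∫₀ˣ β(y)² dy`, one has
`‖Jg‖²_{L²([-π,π])} ≤ ‖κ₁‖_{L¹([0,π])} · ‖g‖²_{L²([-π,π])}`. -/
theorem stmt14 (β : ℝ → ℝ) (hβ : Continuous β) (hβeven : ∀ x, β (-x) = β x)
    (g : ℝ → ℂ) (hgm : AEStronglyMeasurable g volume)
    (hg2 : IntervalIntegrable (fun x => ‖g x‖ ^ 2) volume (-Real.pi) Real.pi) :
    (∫ x in (-Real.pi)..Real.pi,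
        ‖Complex.exp (Complex.I * ((∫ y in (0:ℝ)..x, β y : ℝ) : ℂ)) *
            ∫ y in (0:ℝ)..x,
              (β y : ℂ) * g y /
                Complex.exp (Complex.I * ((∫ t in (0:ℝ)..y, β t : ℝ) : ℂ))‖ ^ 2)
      ≤ (∫ x in (0:ℝ)..Real.pi, ∫ y in (0:ℝ)..x, (β y) ^ 2) *
          ∫ x in (-Real.pi)..Real.pi, ‖g x‖ ^ 2 := by
  have key := integral_sq_norm_primitive_le_of_even (f := β)
    (h := fun y => (β y : ℂ) * g y / Complex.exp (Complex.I * ((∫ t in (0:ℝ)..y, β t : ℝ) : ℂ)))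
    Real.pi_pos.le hβ.aestronglyMeasurable (fun y => by rw [hβeven])
    ((hβ.norm.pow 2).intervalIntegrable _ _) hgm hg2 (by simp only [div_eq_mul_inv]; fun_prop)
    fun y => by
      rw [norm_div, norm_mul, Complex.norm_real, Complex.norm_exp_I_mul_ofReal, div_one]
  simpa only [norm_mul, Complex.norm_exp_I_mul_ofReal, one_mul, Real.norm_eq_abs, sq_abs]
    using key
end

section
/- Let n ≥ 2 and 1 ≤ l ≤ n-1 be integers, and set θ = l/n. For a 2π-periodic function f whose Fourier coefficients vanish on multiples of n (f̂_{nk} = 0 for all k ∈ ℤ), define f^{l,n} by (f^{l,n})^(k) = f̂_{nk+l}. Let V be a smooth 2π-periodic function and V^n(x) = (1/n)V(nx). Then f and g (both with vanishing Fourier modes at multiples of n) satisfy g = V^n·∂_x f + Hf - (1/2π)∫_{-π}^{π} V^n ∂_x f dx if and only if for every 1 ≤ l ≤ n-1, the projections f^{l,n}, g^{l,n} satisfy g^{l,n} = V·∂_x f^{l,n} + iθ·V·f^{l,n} + H f^{l,n} - i·(f^{l,n})^(0). -/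
/-!
Both sides are identities between absolutely convergent Fourier series, hence equivalent to
identities between their coefficients. Multiplication by `Vⁿ`, whose spectrum lies in `nℤ`,
does not mix residue classes mod `n`: the `(nk+l)`-th coefficient of `Vⁿ ∂ₓ f` is
`i Σⱼ (k - j + θ) V̂ⱼ f̂_{n(k-j)+l}`, the `k`-th coefficient of
`V ∂ₓ f^{l,n} + iθ V f^{l,n}`.
The Hilbert transform is diagonal and `sgn(nk+l) = sgn k` except at `k = 0`, which produces the
term `-i (f^{l,n})^(0)`; the mean-value correction only affects the zero mode, a multiple of `n`,
where both sides vanish.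
-/

/-- The Fourier mode `e_k(x) = e^{ikx}`. -/
noncomputable def fmode (k : ℤ) (x : ℝ) : ℂ :=
  Complex.exp (Complex.I * (k : ℂ) * (x : ℂ))

open Complex

lemma fmode_add (j k : ℤ) (x : ℝ) : fmode (j + k) x = fmode j x * fmode k x := by
  simp only [fmode, ← Complex.exp_add]; push_cast; ring_nf

lemma fmode_zero (x : ℝ) : fmode 0 x = 1 := by simp [fmode]

lemma norm_fmode (k : ℤ) (x : ℝ) : ‖fmode k x‖ = 1 := by
  rw [fmode, Complex.norm_exp]; simp [mul_comm]

lemma continuous_fmode (k : ℤ) : Continuous (fmode k) := by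
  unfold fmode; fun_prop

lemma fmode_natCast_mul (k : ℤ) (n : ℕ) (x : ℝ) : fmode k (n * x) = fmode (n * k) x := by
  simp only [fmode]; push_cast; ring_nf

lemma integral_fmode (k : ℤ) :
    ∫ x in -Real.pi..Real.pi, fmode k x = if k = 0 then 2 * (Real.pi : ℂ) else 0 := by
  split_ifs with hk
  · simp [hk, fmode_zero]; ring
  have hc : I * k ≠ 0 := mul_ne_zero I_ne_zero (Int.cast_ne_zero.2 hk)
  have hper : exp (I * k * Real.pi) = exp (I * k * (-Real.pi : ℝ)) :=
    exp_eq_exp_iff_exists_int.2 ⟨k, by push_cast; ring⟩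
  simp only [fmode]
  rw [integral_exp_mul_complex hc, hper, sub_self, zero_div]

noncomputable def fseries (d : ℤ → ℂ) (x : ℝ) : ℂ := ∑' k, d k * fmode k x

section fseries

variable {d e : ℤ → ℂ}

lemma summable_mul_fmode (hd : Summable d) (x : ℝ) : Summable fun k => d k * fmode k x :=
  .of_norm <| by simpa [norm_fmode] using summable_norm_iff.2 hd

lemma fseries_add (hd : Summable d) (he : Summable e) (x : ℝ) :
    fseries (fun k => d k + e k) x = fseries d x + fseries e x := by
  simp only [fseries, add_mul]
  exact (summable_mul_fmode hd x).tsum_add (summable_mul_fmode he x)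

lemma fseries_sub (hd : Summable d) (he : Summable e) (x : ℝ) :
    fseries (fun k => d k - e k) x = fseries d x - fseries e x := by
  simp only [fseries, sub_mul]
  exact (summable_mul_fmode hd x).tsum_sub (summable_mul_fmode he x)

lemma fseries_const_mul (z : ℂ) (x : ℝ) :
    fseries (fun k => z * d k) x = z * fseries d x := by
  simp only [fseries, mul_assoc, tsum_mul_left]

lemma fseries_single_zero (z : ℂ) (x : ℝ) : fseries (Pi.single 0 z) x = z := by
  rw [fseries, tsum_eq_single 0 fun k hk => by simp [hk], Pi.single_eq_same, fmode_zero, mul_one]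

lemma integral_fseries (hd : Summable d) :
    ∫ x in -Real.pi..Real.pi, fseries d x = 2 * Real.pi * d 0 := by
  have hsum := intervalIntegral.hasSum_intervalIntegral_of_summable_norm (a := -Real.pi)
    (b := Real.pi)
    (f := fun k => ⟨fun x => d k * fmode k x, continuous_const.mul (continuous_fmode k)⟩) <|
    (summable_norm_iff.2 hd).of_nonneg_of_le (fun _ => norm_nonneg _) fun k =>
      (ContinuousMap.norm_le _ (norm_nonneg _)).2 fun x => by simp [norm_fmode]
  simp only [ContinuousMap.coe_mk, intervalIntegral.integral_const_mul, integral_fmode] at hsum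
  unfold fseries
  rw [← hsum.tsum_eq, tsum_eq_single 0 fun k hk => by simp [hk]]
  simp [mul_comm]

lemma fseries_mul_fmode_neg (m : ℤ) (x : ℝ) :
    fseries d x * fmode (-m) x = fseries (fun k => d (k + m)) x := by
  rw [fseries, ← tsum_mul_right, ← (Equiv.addRight m).tsum_eq]
  refine tsum_congr fun k => ?_
  simp [mul_assoc, ← fmode_add]

lemma integral_fseries_mul_fmode_neg (hd : Summable d) (m : ℤ) :
    ∫ x in -Real.pi..Real.pi, fseries d x * fmode (-m) x = 2 * Real.pi * d m := by
  have h := integral_fseries (hd.comp_injective (add_left_injective m))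
  simp only [Function.comp_def, zero_add] at h
  simpa only [fseries_mul_fmode_neg m] using h

lemma fseries_eq_iff (hd : Summable d) (he : Summable e) :
    (∀ x, fseries d x = fseries e x) ↔ d = e := by
  refine ⟨fun h => funext fun m => ?_, fun h _ => h ▸ rfl⟩
  have hm := integral_fseries_mul_fmode_neg hd m
  rw [funext h, integral_fseries_mul_fmode_neg he m] at hm
  exact mul_left_cancel₀ (by simp [Real.pi_ne_zero]) hm.symm

end fseries

/-- The coefficients of `(∑ⱼ u j e^{isjx}) · (∑ₖ v k e^{ikx})`. -/
noncomputable def dilConv (s : ℤ) (u v : ℤ → ℂ) (m : ℤ) : ℂ := ∑' j, u j * v (m - s * j)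

@[simps]
def shearSwap (s : ℤ) : ℤ × ℤ ≃ ℤ × ℤ where
  toFun p := (s * p.1 + p.2, p.1)
  invFun p := (p.2, p.1 - s * p.2)
  left_inv p := by simp
  right_inv p := by simp

section dilConv

variable {u v : ℤ → ℂ} (s : ℤ)

lemma summable_dilConv_family (hu : Summable u) (hv : Summable v) :
    Summable fun p : ℤ × ℤ => u p.2 * v (p.1 - s * p.2) := by
  have h : Summable fun p : ℤ × ℤ => u p.1 * v p.2 :=
    summable_mul_of_summable_norm (summable_norm_iff.2 hu) (summable_norm_iff.2 hv)
  simpa [Function.comp_def] using (shearSwap s).symm.summable_iff.2 h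

lemma summable_dilConv (hu : Summable u) (hv : Summable v) : Summable (dilConv s u v) := by
  unfold dilConv
  exact Summable.prod (f := fun p : ℤ × ℤ => u p.2 * v (p.1 - s * p.2))
    (summable_dilConv_family s hu hv)

lemma dilate_mul_fseries (hu : Summable u) (hv : Summable v) (x : ℝ) :
    (∑' j, u j * fmode (s * j) x) * fseries v x = fseries (dilConv s u v) x := by
  set f := fun j => u j * fmode (s * j) x
  set g := fun k => v k * fmode k x
  have hf : Summable fun j => ‖f j‖ := by simpa [f, norm_fmode] using summable_norm_iff.2 hu
  have hg : Summable fun k => ‖g k‖ := summable_norm_iff.2 (summable_mul_fmode hv x)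
  have key (p : ℤ × ℤ) : f ((shearSwap s).symm p).1 * g ((shearSwap s).symm p).2 =
      u p.2 * v (p.1 - s * p.2) * fmode p.1 x := by
    simp only [f, g, shearSwap_symm_apply]
    rw [mul_mul_mul_comm, ← fmode_add, add_sub_cancel]
  have hfg : Summable fun p : ℤ × ℤ => f p.1 * g p.2 := summable_mul_of_summable_norm hf hg
  have h : Summable fun p : ℤ × ℤ => u p.2 * v (p.1 - s * p.2) * fmode p.1 x :=
    ((shearSwap s).symm.summable_iff.2 hfg).congr key
  rw [fseries, tsum_mul_tsum_of_summable_norm hf hg, ← (shearSwap s).symm.tsum_eq,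
    tsum_congr key,
    Summable.tsum_prod (f := fun p : ℤ × ℤ => u p.2 * v (p.1 - s * p.2) * fmode p.1 x) h]
  simp only [dilConv, fseries, tsum_mul_right]

lemma fseries_mul (hu : Summable u) (hv : Summable v) (x : ℝ) :
    fseries u x * fseries v x = fseries (dilConv 1 u v) x := by
  have h := dilate_mul_fseries 1 hu hv x
  simp only [one_mul] at h
  exact h

end dilConv

lemma Int.sign_mul_add_of_ne_zero {n l k : ℤ} (hl : 0 ≤ l) (hln : l < n) (hk : k ≠ 0) :
    (n * k + l).sign = k.sign := by
  rcases hk.lt_or_gt with hk | hk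
  · rw [Int.sign_eq_neg_one_of_neg hk, Int.sign_eq_neg_one_of_neg (by nlinarith)]
  · rw [Int.sign_eq_one_of_pos hk, Int.sign_eq_one_of_pos (by nlinarith)]

def derivCoeff (a : ℤ → ℂ) (k : ℤ) : ℂ := I * k * a k

def hilbertCoeff (a : ℤ → ℂ) (k : ℤ) : ℂ := -I * k.sign * a k

/-- The coefficients of `f^{l,n}` when `a = f̂`. -/
def slice (n l : ℤ) (a : ℤ → ℂ) (k : ℤ) : ℂ := a (n * k + l)

section coefficients

variable {a : ℤ → ℂ}

lemma summable_of_summable_one_add_abs_mul_norm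
    (ha : Summable fun k : ℤ => (1 + |(k : ℝ)|) * ‖a k‖) : Summable a :=
  .of_norm_bounded ha fun k => le_mul_of_one_le_left (norm_nonneg _) (by simp)

lemma summable_derivCoeff_of_summable_one_add_abs_mul_norm
    (ha : Summable fun k : ℤ => (1 + |(k : ℝ)|) * ‖a k‖) : Summable (derivCoeff a) :=
  .of_norm_bounded ha fun k => by
    simp only [derivCoeff, norm_mul, norm_I, one_mul, norm_intCast]
    gcongr; simp

lemma summable_hilbertCoeff (ha : Summable a) : Summable (hilbertCoeff a) :=
  .of_norm_bounded (summable_norm_iff.2 ha) fun k => by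
    simp only [hilbertCoeff, norm_mul, norm_neg, norm_I, one_mul, norm_intCast]
    rcases Int.sign_trichotomy k with h | h | h <;> simp [h]

lemma summable_slice {n : ℤ} (hn : n ≠ 0) (l : ℤ) (ha : Summable a) :
    Summable (slice n l a) :=
  ha.comp_injective fun _ _ h => mul_left_cancel₀ hn (add_right_cancel h)

lemma summable_derivCoeff_slice {n : ℤ} (hn : n ≠ 0) (l : ℤ) (ha : Summable a)
    (ha' : Summable (derivCoeff a)) :
    Summable (derivCoeff (slice n l a)) := by
  -- `k a (nk+l) = ((nk+l) a (nk+l) - l a (nk+l)) / n`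
  refine (((summable_slice hn l ha').mul_left (1 / (n : ℂ))).sub
    ((summable_slice hn l ha).mul_left (I * l / n))).congr fun k => ?_
  simp only [derivCoeff, slice]
  push_cast
  field_simp
  ring

end coefficients

/-- Fourier coefficients of `Vⁿ ∂ₓ f`, where `c = V̂`, `a = f̂` and `Vⁿ(x) = V(nx)/n`. -/
noncomputable def transportCoeff (n : ℕ) (a c : ℤ → ℂ) : ℤ → ℂ :=
  dilConv n (fun j => 1 / (n : ℂ) * c j) (derivCoeff a)

/-- Fourier coefficients of `Vⁿ ∂ₓ f + Hf - (1/2π) ∫ Vⁿ ∂ₓ f`. -/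
noncomputable def linOpCoeff (n : ℕ) (a c : ℤ → ℂ) (k : ℤ) : ℂ :=
  transportCoeff n a c k + hilbertCoeff a k - (Pi.single 0 (transportCoeff n a c 0) : ℤ → ℂ) k

/-- Fourier coefficients of `V ∂ₓ f^{l,n} + iθ V f^{l,n} + H f^{l,n} - i (f^{l,n})^(0)`,
with `θ = l/n`. -/
noncomputable def unfoldedOpCoeff (n : ℕ) (l : ℤ) (a c : ℤ → ℂ) (k : ℤ) : ℂ :=
  dilConv 1 c (derivCoeff (slice n l a)) k + I * (l / n) * dilConv 1 c (slice n l a) k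
    + hilbertCoeff (slice n l a) k - (Pi.single 0 (I * a l) : ℤ → ℂ) k

section operators

variable {n : ℕ} {a c : ℤ → ℂ}

lemma summable_transportCoeff (ha' : Summable (derivCoeff a)) (hc : Summable c) :
    Summable (transportCoeff n a c) :=
  summable_dilConv _ (hc.mul_left _) ha'

lemma summable_linOpCoeff (ha : Summable a) (ha' : Summable (derivCoeff a)) (hc : Summable c) :
    Summable (linOpCoeff n a c) :=
  ((summable_transportCoeff ha' hc).add (summable_hilbertCoeff ha)).sub
    (hasSum_pi_single _ _).summable

lemma summable_unfoldedOpCoeff (hn : (n : ℤ) ≠ 0) (l : ℤ) (ha : Summable a)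
    (ha' : Summable (derivCoeff a)) (hc : Summable c) :
    Summable (unfoldedOpCoeff n l a c) :=
  (((summable_dilConv 1 hc (summable_derivCoeff_slice hn l ha ha')).add
    ((summable_dilConv 1 hc (summable_slice hn l ha)).mul_left _)).add
    (summable_hilbertCoeff (summable_slice hn l ha))).sub (hasSum_pi_single _ _).summable

lemma stretch_mul_fseries (ha' : Summable (derivCoeff a)) (hc : Summable c) (x : ℝ) :
    1 / (n : ℂ) * (∑' k, c k * fmode k (n * x)) * fseries (derivCoeff a) x =
      fseries (transportCoeff n a c) x := by
  rw [← tsum_mul_left]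
  simp only [fmode_natCast_mul, ← mul_assoc]
  exact dilate_mul_fseries _ (hc.mul_left _) ha' x

lemma linOp_eq_fseries (ha : Summable a) (ha' : Summable (derivCoeff a)) (hc : Summable c)
    (x : ℝ) :
    1 / (n : ℂ) * (∑' k, c k * fmode k (n * x)) * fseries (derivCoeff a) x
        + fseries (hilbertCoeff a) x
        - 1 / (2 * (Real.pi : ℂ)) * ∫ y in -Real.pi..Real.pi,
            1 / (n : ℂ) * (∑' k, c k * fmode k (n * y)) * fseries (derivCoeff a) y =
      fseries (linOpCoeff n a c) x := by
  have hT := summable_transportCoeff (n := n) ha' hc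
  have hH := summable_hilbertCoeff ha
  simp only [stretch_mul_fseries ha' hc]
  unfold linOpCoeff
  rw [integral_fseries hT,
    fseries_sub (hT.add hH) (hasSum_pi_single 0 (transportCoeff n a c 0)).summable,
    fseries_add hT hH, fseries_single_zero]
  field_simp [Real.pi_ne_zero]

lemma unfoldedOp_eq_fseries (hn : (n : ℤ) ≠ 0) (l : ℤ) (ha : Summable a)
    (ha' : Summable (derivCoeff a)) (hc : Summable c) (x : ℝ) :
    fseries c x * fseries (derivCoeff (slice n l a)) x
        + I * ((l : ℂ) / (n : ℂ)) * fseries c x * fseries (slice n l a) x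
        + fseries (hilbertCoeff (slice n l a)) x - I * a l =
      fseries (unfoldedOpCoeff n l a c) x := by
  have hD := summable_dilConv 1 hc (summable_derivCoeff_slice hn l ha ha')
  have hS := (summable_dilConv 1 hc (summable_slice hn l ha)).mul_left (I * (l / n))
  have hH := summable_hilbertCoeff (summable_slice hn l ha)
  unfold unfoldedOpCoeff
  rw [fseries_sub ((hD.add hS).add hH) (hasSum_pi_single 0 (I * a l)).summable,
    fseries_add (hD.add hS) hH, fseries_add hD hS, fseries_const_mul, fseries_single_zero,
    ← fseries_mul hc (summable_derivCoeff_slice hn l ha ha'),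
    ← fseries_mul hc (summable_slice hn l ha), mul_assoc (I * _)]

end operators

section coefficientIdentities

variable {n : ℕ} {a c : ℤ → ℂ}

lemma transportCoeff_mul (haz : ∀ k : ℤ, a (n * k) = 0) (k : ℤ) :
    transportCoeff n a c (n * k) = 0 := by
  simp only [transportCoeff, dilConv, derivCoeff, ← mul_sub, haz, mul_zero, tsum_zero]

lemma linOpCoeff_mul (haz : ∀ k : ℤ, a (n * k) = 0) (k : ℤ) :
    linOpCoeff n a c (n * k) = 0 := by
  have h0 := transportCoeff_mul (c := c) haz 0
  rw [mul_zero] at h0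
  simp [linOpCoeff, hilbertCoeff, transportCoeff_mul haz, haz, h0]

lemma transportCoeff_mul_add (hn : (n : ℤ) ≠ 0) (l : ℤ) (ha : Summable a)
    (ha' : Summable (derivCoeff a)) (hc : Summable c) (k : ℤ) :
    transportCoeff n a c (n * k + l) =
      dilConv 1 c (derivCoeff (slice n l a)) k + I * (l / n) * dilConv 1 c (slice n l a) k := by
  have hD := (summable_dilConv_family 1 hc (summable_derivCoeff_slice hn l ha ha')).prod_factor k
  have hS := ((summable_dilConv_family 1 hc (summable_slice hn l ha)).prod_factor k).mul_left
    (I * (l / n))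
  rw [dilConv, dilConv, ← tsum_mul_left, ← hD.tsum_add hS, transportCoeff, dilConv]
  refine tsum_congr fun j => ?_
  have hidx : n * k + l - n * j = n * (k - 1 * j) + l := by ring
  have hnC : (n : ℂ) ≠ 0 := by exact_mod_cast hn
  simp only [derivCoeff, slice, hidx]
  push_cast
  field_simp

lemma hilbertCoeff_mul_add {l : ℤ} (hl : 0 < l) (hln : l < n) (k : ℤ) :
    hilbertCoeff a (n * k + l) =
      hilbertCoeff (slice n l a) k - (Pi.single 0 (I * a l) : ℤ → ℂ) k := by
  rcases eq_or_ne k 0 with rfl | hk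
  · simp [hilbertCoeff, slice, Int.sign_eq_one_of_pos hl]
  · simp [hilbertCoeff, slice, Int.sign_mul_add_of_ne_zero hl.le hln hk, hk]

lemma linOpCoeff_mul_add {l : ℤ} (hl : 0 < l) (hln : l < n) (ha : Summable a)
    (ha' : Summable (derivCoeff a)) (hc : Summable c) (k : ℤ) :
    linOpCoeff n a c (n * k + l) = unfoldedOpCoeff n l a c k := by
  have hnkl : (n : ℤ) * k + l ≠ 0 := by
    rcases le_or_gt 0 k with hk | hk <;> nlinarith
  rw [linOpCoeff, unfoldedOpCoeff, transportCoeff_mul_add (by omega) l ha ha' hc,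
    hilbertCoeff_mul_add hl hln, Pi.single_eq_of_ne hnkl]
  ring

end coefficientIdentities

lemma eq_linOpCoeff_iff {n : ℕ} {a b c : ℤ → ℂ} (hn : 0 < n) (ha : Summable a)
    (ha' : Summable (derivCoeff a)) (hc : Summable c)
    (haz : ∀ k : ℤ, a (n * k) = 0) (hbz : ∀ k : ℤ, b (n * k) = 0) :
    b = linOpCoeff n a c ↔
      ∀ l : ℤ, 1 ≤ l → l ≤ n - 1 → slice n l b = unfoldedOpCoeff n l a c := by
  refine ⟨?_, fun h => funext fun m => ?_⟩
  · rintro rfl l hl1 hl2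
    exact funext (linOpCoeff_mul_add (by omega) (by omega) ha ha' hc)
  have hlt := Int.emod_lt_of_pos m (Int.natCast_pos.2 hn)
  rw [← Int.mul_ediv_add_emod m n]
  rcases (Int.emod_nonneg m (Int.natCast_pos.2 hn).ne').eq_or_lt with h0 | hpos
  · rw [← h0, add_zero, hbz, linOpCoeff_mul haz]
  · rw [linOpCoeff_mul_add hpos hlt ha ha' hc]
    exact congrFun (h _ hpos (by omega)) _

/-- unfolding of the linearized operator.  Let `n ≥ 2`, and let
`f, g` be smooth `2π`-periodic functions (with absolutely summable, suitably weighted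
Fourier coefficients `a, b`) whose Fourier coefficients vanish on multiples of `n`.
Let `V` be smooth with coefficients `c`, and `Vⁿ(x) = (1/n) V(nx)`.  Then
`g = Vⁿ ∂ₓ f + Hf - (1/2π)∫ Vⁿ ∂ₓ f` holds if and only if for every `1 ≤ l ≤ n-1`,
with `θ = l/n`, the projections `f^{l,n}, g^{l,n}` (with coefficients `a (nk+l)`,
`b (nk+l)`) satisfy `g^{l,n} = V ∂ₓ f^{l,n} + iθ V f^{l,n} + H f^{l,n} - i (f^{l,n})^(0)`. -/
theorem stmt15 (n : ℕ) (hn : 2 ≤ n) (a b c : ℤ → ℂ)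
    (ha : Summable fun k : ℤ => (1 + |(k : ℝ)|) * ‖a k‖)
    (hb : Summable fun k : ℤ => ‖b k‖)
    (hc : Summable fun k : ℤ => ‖c k‖)
    (haz : ∀ k : ℤ, a ((n : ℤ) * k) = 0)
    (hbz : ∀ k : ℤ, b ((n : ℤ) * k) = 0) :
    (∀ x : ℝ,
        (∑' k : ℤ, b k * fmode k x) =
          (1 / (n : ℂ)) * (∑' k : ℤ, c k * fmode k (n * x)) *
              (∑' k : ℤ, Complex.I * (k : ℂ) * a k * fmode k x)
            + (∑' k : ℤ, (-Complex.I) * ((k.sign : ℤ) : ℂ) * a k * fmode k x)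
            - (1 / (2 * (Real.pi : ℂ))) *
                ∫ y in (-Real.pi)..Real.pi,
                  (1 / (n : ℂ)) * (∑' k : ℤ, c k * fmode k (n * y)) *
                    (∑' k : ℤ, Complex.I * (k : ℂ) * a k * fmode k y))
      ↔
      (∀ l : ℤ, 1 ≤ l → l ≤ (n : ℤ) - 1 → ∀ x : ℝ,
        (∑' k : ℤ, b ((n : ℤ) * k + l) * fmode k x) =
          (∑' k : ℤ, c k * fmode k x) *
              (∑' k : ℤ, Complex.I * (k : ℂ) * a ((n : ℤ) * k + l) * fmode k x)
            + Complex.I * ((l : ℂ) / (n : ℂ)) * (∑' k : ℤ, c k * fmode k x) *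
                (∑' k : ℤ, a ((n : ℤ) * k + l) * fmode k x)
            + (∑' k : ℤ, (-Complex.I) * ((k.sign : ℤ) : ℂ) * a ((n : ℤ) * k + l) * fmode k x)
            - Complex.I * a l) := by
  have hn0 : (n : ℤ) ≠ 0 := by omega
  have hA := summable_of_summable_one_add_abs_mul_norm ha
  have hA' := summable_derivCoeff_of_summable_one_add_abs_mul_norm ha
  have hB := hb.of_norm
  have hC := hc.of_norm
  calc _ ↔ ∀ x, fseries b x = fseries (linOpCoeff n a c) x :=
        forall_congr' fun x => by rw [← linOp_eq_fseries hA hA' hC]; rfl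
    _ ↔ b = linOpCoeff n a c := fseries_eq_iff hB (summable_linOpCoeff hA hA' hC)
    _ ↔ ∀ l : ℤ, 1 ≤ l → l ≤ n - 1 → slice n l b = unfoldedOpCoeff n l a c :=
        eq_linOpCoeff_iff (by omega) hA hA' hC haz hbz
    _ ↔ _ := forall₃_congr fun l _ _ => by
        rw [← fseries_eq_iff (summable_slice hn0 l hB)
          (summable_unfoldedOpCoeff hn0 l hA hA' hC)]
        exact forall_congr' fun x => by rw [← unfoldedOp_eq_fseries hn0 l hA hA' hC]; rfl
end

section
/- Let L be a real-linear operator on 2π-periodic complex-valued functions of the form Lf = (c+v)·∂_x f + Hf - (1/2π)∫_{-π}^{π} v·∂_x f dx, where v is real-valued and even. If f is an eigenfunction of L with eigenvalue λ, then the reflected function f♯(x) := f(-x) is an eigenfunction of L with eigenvalue -λ. -/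
/-- reflection of eigenfunctions.  Let
`L f = (c + v) ∂ₓ f + Hf - (1/2π) ∫ v ∂ₓ f` with `v` real-valued and even
(Fourier coefficients `w`, with `w (-k) = w k` and `w k` real).  Expressed on Fourier
coefficients `a` of `f`, the eigenvalue equation `L f = λ f` reads, for every `k`,
`c·ik·a k + ∑_j w j · i(k-j) · a (k-j) + (-i sgn k)·a k - δ_{k,0}·∑_j w j·i(-j)·a (-j)
  = λ · a k`.
If `f` is an eigenfunction of `L` with eigenvalue `λ`, then the reflection
`f♯(x) = f(-x)` (coefficients `k ↦ a (-k)`) is an eigenfunction with eigenvalue `-λ`. -/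
theorem stmt17 (c : ℝ) (lam : ℂ) (w a : ℤ → ℂ)
    (hw : Summable fun k : ℤ => ‖w k‖)
    (hweven : ∀ k : ℤ, w (-k) = w k)
    (hwreal : ∀ k : ℤ, (w k).im = 0)
    (ha : Summable fun k : ℤ => (1 + |(k : ℝ)|) * ‖a k‖)
    (hane : ∃ k : ℤ, a k ≠ 0)
    (heig : ∀ k : ℤ,
      (c : ℂ) * (Complex.I * (k : ℂ)) * a k
        + (∑' j : ℤ, w j * (Complex.I * ((k : ℂ) - (j : ℂ))) * a (k - j))
        + (-Complex.I) * ((k.sign : ℤ) : ℂ) * a k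
        - (if k = 0 then ∑' j : ℤ, w j * (Complex.I * (-(j : ℂ))) * a (-j) else 0)
      = lam * a k) :
    ∀ k : ℤ,
      (c : ℂ) * (Complex.I * (k : ℂ)) * a (-k)
        + (∑' j : ℤ, w j * (Complex.I * ((k : ℂ) - (j : ℂ))) * a (j - k))
        + (-Complex.I) * ((k.sign : ℤ) : ℂ) * a (-k)
        - (if k = 0 then ∑' j : ℤ, w j * (Complex.I * (-(j : ℂ))) * a j else 0)
      = (-lam) * a (-k) := by
  intro k
  have h := heig (-k)
  have hsum : (∑' j : ℤ, w j * (Complex.I * (((-k : ℤ) : ℂ) - (j : ℂ))) * a (-k - j))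
      = -∑' j : ℤ, w j * (Complex.I * ((k : ℂ) - (j : ℂ))) * a (j - k) := by
    rw [← (Equiv.neg ℤ).tsum_eq
      (fun j : ℤ => w j * (Complex.I * (((-k : ℤ) : ℂ) - (j : ℂ))) * a (-k - j)),
      ← tsum_neg]
    refine tsum_congr fun j => ?_
    simp only [Equiv.neg_apply, hweven]
    have : -k - -j = j - k := by ring
    rw [this]
    push_cast
    ring
  have hS : (∑' j : ℤ, w j * (Complex.I * (-(j : ℂ))) * a (-j))
      = -∑' j : ℤ, w j * (Complex.I * (-(j : ℂ))) * a j := by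
    rw [← (Equiv.neg ℤ).tsum_eq
      (fun j : ℤ => w j * (Complex.I * (-(j : ℂ))) * a (-j)), ← tsum_neg]
    refine tsum_congr fun j => ?_
    simp only [Equiv.neg_apply, hweven, neg_neg]
    push_cast
    ring
  rw [hsum, hS] at h
  simp only [neg_eq_zero] at h
  have hk : (((-k : ℤ).sign : ℤ) : ℂ) = -((k.sign : ℤ) : ℂ) := by
    rw [Int.sign_neg]; push_cast; ring
  rw [hk] at h
  push_cast at h ⊢
  by_cases hk0 : k = 0 <;> simp only [hk0, if_true, if_false] at h ⊢ <;> linear_combination -h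
end
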